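/- Let L ⊆ Σ* be a regular language. Then the function n ↦ |Σ^{≤n}/≈_L| is bounded by a polynomial in n if and only if the Myhill–Nerode right congruence ~_L has no critical tuple. -/

import Mathlib

/-! Common definitions for sliding-window / visibly pushdown formalizations. -/

/-- `γ` grows polynomially: `γ(n) ∈ O(n^k)` for some `k`. -/
def GrowsPolynomially (γ : ℕ → ℕ) : Prop :=
  ∃ k C : ℕ, ∀ n : ℕ, γ n ≤ C * (n + 1) ^ k

/-- `γ` grows exponentially: there is `c > 1` with `γ(n) ≥ c^n` for infinitely many `n`. -/
def GrowsExponentially (γ : ℕ → ℕ) : Prop :=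
  ∃ c : ℝ, 1 < c ∧ ∀ m : ℕ, ∃ n : ℕ, m ≤ n ∧ c ^ n ≤ (γ n : ℝ)

/-- A set of words is suffix-closed. -/
def SuffixClosed {α : Type} (X : Set (List α)) : Prop :=
  ∀ x ∈ X, ∀ s : List α, s <:+ x → s ∈ X

/-- Domain of a partial function presented with `Option`. -/
def pdom {α β : Type} (t : List α → Option β) : Set (List α) := {x | t x ≠ none}

/-- The `t`-growth of `X`: the number of values of `t` on words of `X` of length at most `n`. -/
noncomputable def growthOf {α : Type} {Y : Type} (t : List α → Y) (X : Set (List α)) (n : ℕ) : ℕ :=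
  (t '' {x | x ∈ X ∧ x.length ≤ n}).ncard

/-- Growth of a language: number of its words of length at most `n`. -/
noncomputable def langGrowth {β : Type} (L : Set (List β)) (n : ℕ) : ℕ :=
  {y | y ∈ L ∧ y.length ≤ n}.ncard

/-- Suffix expansion of a (total or partial) function: the tuple of values on all
nonempty suffixes `a₁⋯aₙ, a₂⋯aₙ, …, aₙ` of the input. -/
def cev {α : Type} {Y : Type} (t : List α → Y) (x : List α) : List Y :=
  x.tails.dropLast.map t

/-- Image of `X` under the partial function `t`. -/
def optImage {α β : Type} (t : List α → Option β) (X : Set (List α)) : Set β :=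
  {y | ∃ x ∈ X, t x = some y}

/-- A language is bounded if it is contained in `w₁* w₂* ⋯ w_k*`. -/
def BoundedLang {β : Type} (L : Set (List β)) : Prop :=
  ∃ ws : List (List β), ∀ x ∈ L, ∃ ms : List ℕ, ms.length = ws.length ∧
    x = (List.zipWith (fun (w : List β) (m : ℕ) => (List.replicate m w).flatten) ws ms).flatten

/-- `{u,v}*`: all concatenations of copies of `u` and `v`. -/
def UVStar {α : Type} (u v : List α) : Set (List α) :=
  {w | ∃ l : List (List α), (∀ p ∈ l, p = u ∨ p = v) ∧ w = l.flatten}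

/-- `{u,v}^{≤ n}`: concatenations of at most `n` words, each equal to `u` or `v`. -/
def UVPow {α : Type} (u v : List α) (n : ℕ) : Set (List α) :=
  {w | ∃ l : List (List α), (∀ p ∈ l, p = u ∨ p = v) ∧ l.length ≤ n ∧ w = l.flatten}

/-- The set `{u₂,v₂}{u,v}* Z`. -/
def FoolingSet {α : Type} (u₂ v₂ u v : List α) (Z : Set (List α)) : Set (List α) :=
  {x | ∃ a w z, (a = u₂ ∨ a = v₂) ∧ w ∈ UVStar u v ∧ z ∈ Z ∧ x = a ++ (w ++ z)}

/-- Linear fooling scheme for a partial function `t`. -/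
def IsLinearFoolingScheme {α Y : Type} (t : List α → Option Y)
    (u₂ v₂ u v : List α) (Z : Set (List α)) : Prop :=
  u₂ <:+ u ∧ v₂ <:+ v ∧ u₂.length = v₂.length ∧
  FoolingSet u₂ v₂ u v Z ⊆ pdom t ∧
  ∃ C : ℕ, ∀ n : ℕ, ∃ z ∈ Z, z.length ≤ C * (n + 1) ∧
    ∀ w ∈ UVPow u v n, t (u₂ ++ (w ++ z)) ≠ t (v₂ ++ (w ++ z))

/-- `X` contains a linear fooling set for `t`. -/
def ContainsLinearFoolingSet {α Y : Type} (t : List α → Option Y) (X : Set (List α)) : Prop :=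
  ∃ u₂ v₂ u v Z, IsLinearFoolingScheme t u₂ v₂ u v Z ∧ FoolingSet u₂ v₂ u v Z ⊆ X

/-! ### Transducers and rational functions -/

/-- A finite-state transducer over `(α, β)` with terminal output function. -/
structure Transducer (α β : Type) where
  Q : Type
  finQ : Fintype Q
  I : Set Q
  F : Set Q
  Δ : Set (Q × List α × List β × Q)
  finΔ : Δ.Finite
  o : Q → List β

namespace Transducer

variable {α β : Type}

/-- A run from `p` to `r` with input `x` and output `y`. -/
inductive Run (A : Transducer α β) : A.Q → List α → List β → A.Q → Prop
  | nil (q : A.Q) : Run A q [] [] q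
  | cons {p q r : A.Q} {x₁ x : List α} {y₁ y : List β} :
      (p, x₁, y₁, q) ∈ A.Δ → Run A q x y r → Run A p (x₁ ++ x) (y₁ ++ y) r

/-- The transduction defined by a transducer. -/
def T (A : Transducer α β) : Set (List α × List β) :=
  {p | ∃ q₀ q y, q₀ ∈ A.I ∧ q ∈ A.F ∧ A.Run q₀ p.1 y q ∧ p.2 = y ++ A.o q}

end Transducer

/-- A partial function is rational if its graph is the transduction of some transducer. -/
def IsRationalFun {α β : Type} (t : List α → Option (List β)) : Prop :=
  ∃ A : Transducer α β, ∀ x y, t x = some y ↔ (x, y) ∈ A.T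

/-! ### Right congruences, suffix expansions, critical tuples -/

/-- A right congruence: an equivalence relation compatible with appending on the right. -/
def IsRightCongruence {α : Type} (r : List α → List α → Prop) : Prop :=
  Equivalence r ∧ ∀ x y z : List α, r x y → r (x ++ z) (y ++ z)

/-- Suffix expansion of a relation: words of the same length whose corresponding
nonempty suffixes are all related. -/
def SuffixExpansion {α : Type} (r : List α → List α → Prop) (x y : List α) : Prop :=
  x.length = y.length ∧ ∀ i < x.length, r (x.drop i) (y.drop i)

/-- Number of `r`-classes of words of length at most `n`. -/
noncomputable def classCount {α : Type} (r : List α → List α → Prop) (n : ℕ) : ℕ :=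
  Set.ncard {C : Set (List α) | ∃ x : List α, x.length ≤ n ∧ C = {y | r x y}}

/-- A relation has finite index if it has finitely many classes. -/
def FiniteIndex {α : Type} (r : List α → List α → Prop) : Prop :=
  Set.Finite {C : Set (List α) | ∃ x : List α, C = {y | r x y}}

/-- Critical tuple in a right congruence. -/
def IsCriticalTuple {α : Type} (r : List α → List α → Prop) (u₂ v₂ u v : List α) : Prop :=
  1 ≤ u₂.length ∧ u₂.length = v₂.length ∧ u₂ <:+ u ∧ v₂ <:+ v ∧
  ∀ w ∈ UVStar u v, ¬ r (u₂ ++ w) (v₂ ++ w)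

/-- The Myhill–Nerode right congruence of a language. -/
def MNrel {α : Type} (L : Set (List α)) (x y : List α) : Prop :=
  ∀ z : List α, x ++ z ∈ L ↔ y ++ z ∈ L

/-! ### Suffix distance and the canonical right congruence of a rational function -/

/-- Longest common prefix. -/
def cpre {β : Type} [DecidableEq β] : List β → List β → List β
  | a :: x, b :: y => if a = b then a :: cpre x y else []
  | _, _ => []

/-- `‖x,y‖ = |x| + |y| − 2|x ∧ y|`, where `x ∧ y` is the longest common suffix. -/
def suffDist {β : Type} [DecidableEq β] (x y : List β) : ℕ :=
  x.length + y.length - 2 * (cpre x.reverse y.reverse).length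

/-- Value of a partial function (defaulting to the empty word off the domain). -/
def pval {α β : Type} (t : List α → Option (List β)) (x : List α) : List β :=
  (t x).getD []

/-- The right congruence `R_t` of Reutenauer–Schützenberger. -/
def Rt {α β : Type} [DecidableEq β] (t : List α → Option (List β)) (u v : List α) : Prop :=
  (∀ z : List α, u ++ z ∈ pdom t ↔ v ++ z ∈ pdom t) ∧
  Set.Finite {d : ℕ | ∃ w : List α, u ++ w ∈ pdom t ∧ v ++ w ∈ pdom t ∧
      d = suffDist (pval t (u ++ w)) (pval t (v ++ w))}

/-- Two partial functions are adjacent. -/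
def Adjacent {α β : Type} [DecidableEq β] (t₁ t₂ : List α → Option (List β)) : Prop :=
  Set.Finite {d : ℕ | ∃ w : List α, w ∈ pdom t₁ ∧ w ∈ pdom t₂ ∧
      d = suffDist (pval t₁ w) (pval t₂ w)}

/-! ### Visibly pushdown automata -/

/-- Kinds of letters of a pushdown alphabet. -/
inductive VPKind : Type
  | call : VPKind
  | ret : VPKind
  | intern : VPKind
deriving DecidableEq

/-- A visibly pushdown automaton over the pushdown alphabet determined by `pa`.
The bottom-of-stack symbol `⊥` is represented implicitly by the empty stack. -/
structure VPA (α : Type) (pa : α → VPKind) where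
  Q : Type
  finQ : Fintype Q
  Γ : Type
  finΓ : Fintype Γ
  q₀ : Q
  F : Set Q
  δc : Q → α → Γ × Q
  δr : Q → α → Option Γ → Q
  δi : Q → α → Q

namespace VPA

variable {α : Type} {pa : α → VPKind}

/-- One step of the VPA on a configuration (stack with top at the head, state). -/
def step (A : VPA α pa) (c : List A.Γ × A.Q) (a : α) : List A.Γ × A.Q :=
  match pa a with
  | VPKind.call => ((A.δc c.2 a).1 :: c.1, (A.δc c.2 a).2)
  | VPKind.intern => (c.1, A.δi c.2 a)
  | VPKind.ret =>
    match c.1 with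
    | [] => ([], A.δr c.2 a none)
    | γ :: st => (st, A.δr c.2 a (some γ))

/-- Extended transition function on words. -/
def run (A : VPA α pa) (c : List A.Γ × A.Q) (w : List α) : List A.Γ × A.Q :=
  w.foldl A.step c

/-- The language accepted by a VPA (from the initial configuration `⊥q₀`). -/
def acceptsLang (A : VPA α pa) : Set (List α) :=
  {w | (A.run ([], A.q₀) w).2 ∈ A.F}

/-- Language accepted from a configuration. -/
def AccLang (A : VPA α pa) (c : List A.Γ × A.Q) : Set (List α) :=
  {w | (A.run c w).2 ∈ A.F}

/-- The reachable configurations. -/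
def rConf (A : VPA α pa) : Set (List A.Γ × A.Q) :=
  Set.range (fun w => A.run ([], A.q₀) w)

end VPA

/-- A language is a visibly pushdown language over the pushdown alphabet `pa`. -/
def IsVPL {α : Type} (pa : α → VPKind) (L : Set (List α)) : Prop :=
  ∃ A : VPA α pa, L = A.acceptsLang

/-- Well-matched words over a pushdown alphabet. -/
inductive WellMatched {α : Type} (pa : α → VPKind) : List α → Prop
  | nil : WellMatched pa []
  | intern (a : α) : pa a = VPKind.intern → WellMatched pa [a]
  | append {u v : List α} : WellMatched pa u → WellMatched pa v → WellMatched pa (u ++ v)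
  | wrap {w : List α} {a b : α} : WellMatched pa w → pa a = VPKind.call → pa b = VPKind.ret →
      WellMatched pa (a :: (w ++ [b]))

/-- Descending words: concatenations of well-matched words and return letters. -/
def Descending {α : Type} (pa : α → VPKind) (w : List α) : Prop :=
  ∃ l : List (List α),
    (∀ p ∈ l, WellMatched pa p ∨ ∃ b : α, pa b = VPKind.ret ∧ p = [b]) ∧ w = l.flatten

/-- Length-lexicographic order on configurations `⊥αq` (stacks compared bottom-first). -/
def ConfLe {Q Γ : Type} (ltQ : LinearOrder Q) (ltΓ : LinearOrder Γ)
    (c d : List Γ × Q) : Prop :=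
  c.1.length < d.1.length ∨
    (c.1.length = d.1.length ∧
      (List.Lex ltΓ.lt c.1.reverse d.1.reverse ∨ (c.1 = d.1 ∧ ltQ.le c.2 d.2)))

/-- `rep` chooses from each equivalence class of reachable configurations the
length-lexicographically least representative. -/
def IsRepFun {α : Type} {pa : α → VPKind} (A : VPA α pa)
    (ltQ : LinearOrder A.Q) (ltΓ : LinearOrder A.Γ)
    (rep : List A.Γ × A.Q → List A.Γ × A.Q) : Prop :=
  ∀ c ∈ A.rConf, rep c ∈ A.rConf ∧ A.AccLang (rep c) = A.AccLang c ∧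
    ∀ c' ∈ A.rConf, A.AccLang c' = A.AccLang c → ConfLe ltQ ltΓ (rep c) c'

/-- `ν_A(w)`: the representative of the configuration reached on `w`. -/
def nuA {α : Type} {pa : α → VPKind} (A : VPA α pa)
    (rep : List A.Γ × A.Q → List A.Γ × A.Q) (w : List α) : List A.Γ × A.Q :=
  rep (A.run ([], A.q₀) w)

/-- `σ₀(w)`: the states representing the Myhill–Nerode classes of the nonempty suffixes. -/
def sigma0 {α : Type} {pa : α → VPKind} (A : VPA α pa)
    (rep : List A.Γ × A.Q → List A.Γ × A.Q) (w : List α) : List A.Q :=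
  w.tails.dropLast.map fun s => (nuA A rep s).2

/-- `φ(w)`: the state transformation of a well-matched word. -/
def phiVPA {α : Type} {pa : α → VPKind} (A : VPA α pa) (w : List α) : A.Q → A.Q :=
  fun p => (A.run ([], p) w).2

/-- `σ₁(w) = φ(w) q₂ ⋯ qₙ`, a word over the alphabet `Q^Q ∪ Q`. -/
def sigma1 {α : Type} {pa : α → VPKind} (A : VPA α pa)
    (rep : List A.Γ × A.Q → List A.Γ × A.Q) (w : List α) : List ((A.Q → A.Q) ⊕ A.Q) :=
  Sum.inl (phiVPA A w) :: ((sigma0 A rep w).tail.map Sum.inr)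

/-! ### Real-time right transducers -/

/-- A real-time right transducer (reads its input from right to left). -/
structure RightTransducer (α β : Type) where
  Q : Type
  finQ : Fintype Q
  F : Set Q
  I : Set Q
  Δ : Set (Q × α × List β × Q)
  finΔ : Δ.Finite
  o : Q → List β

namespace RightTransducer

variable {α β : Type}

/-- Input word of a sequence of transitions. -/
def inputOf {Q : Type} (ts : List (Q × α × List β × Q)) : List α :=
  ts.map fun tr => tr.2.1

/-- Output word of a sequence of transitions. -/
def outputOf {Q : Type} (ts : List (Q × α × List β × Q)) : List β :=
  (ts.map fun tr => tr.2.2.1).flatten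

/-- `IsRunFrom A q ts p`: `ts` is a run on its input from the (rightmost) state `p`
to the (leftmost) state `q`; the transitions are listed left to right. -/
def IsRunFrom (A : RightTransducer α β) : A.Q → List (A.Q × α × List β × A.Q) → A.Q → Prop
  | q, [], p => q = p
  | q, tr :: ts, p => tr ∈ A.Δ ∧ tr.1 = q ∧ IsRunFrom A tr.2.2.2 ts p

/-- There is a run on `w` from `p` (right) to `q` (left). -/
def RunOn (A : RightTransducer α β) (q : A.Q) (w : List α) (p : A.Q) : Prop :=
  ∃ ts, A.IsRunFrom q ts p ∧ inputOf ts = w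

/-- `q ⪯ p`: there is a run from `p` to `q`. -/
def Below (A : RightTransducer α β) (q p : A.Q) : Prop :=
  ∃ w, A.RunOn q w p

/-- The partial function defined by a right transducer. -/
def Defines (A : RightTransducer α β) (t : List α → Option (List β)) : Prop :=
  ∀ x y, t x = some y ↔ ∃ p q ts, p ∈ A.F ∧ q ∈ A.I ∧ A.IsRunFrom p ts q ∧
    inputOf ts = x ∧ y = A.o p ++ outputOf ts

/-- Every state occurs on some initial accepting run. -/
def Trim (A : RightTransducer α β) : Prop :=
  ∀ s : A.Q, ∃ p q ts₁ ts₂, p ∈ A.F ∧ q ∈ A.I ∧ A.IsRunFrom p ts₁ s ∧ A.IsRunFrom s ts₂ q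

/-- Every input word has at most one initial accepting run. -/
def Unambiguous (A : RightTransducer α β) : Prop :=
  ∀ p p' q q' ts ts', p ∈ A.F → p' ∈ A.F → q ∈ A.I → q' ∈ A.I →
    A.IsRunFrom p ts q → A.IsRunFrom p' ts' q' → inputOf ts = inputOf ts' →
    p = p' ∧ ts = ts'

/-- `w` is guarded by `p`: some run on `w` from `p` stays in the SCC of `p`. -/
def Guarded (A : RightTransducer α β) (p : A.Q) (w : List α) : Prop :=
  ∃ q', A.RunOn q' w p ∧ A.Below p q'

/-- The transducer is well-behaved: the terminal outputs of guarded accepting runs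
from the same state on words of equal length coincide. -/
def WellBehaved (A : RightTransducer α β) : Prop :=
  ∀ (p q q' : A.Q) ts ts', q ∈ A.F → q' ∈ A.F →
    A.IsRunFrom q ts p → A.IsRunFrom q' ts' p →
    A.Guarded p (inputOf ts) → A.Guarded p (inputOf ts') →
    (inputOf ts).length = (inputOf ts').length →
    A.o q ++ outputOf ts = A.o q' ++ outputOf ts'

end RightTransducer

/-! ### The Parikh-like map Ψ -/

/-- `Ψ(w)`: each letter of `w` paired with its position counted from the right (1-based). -/
def Psi {α : Type} (w : List α) : Set (α × ℕ) :=
  {p | ∃ i : ℕ, w[i]? = some p.1 ∧ p.2 = w.length - i}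

/-- `Ψ(L) = ⋃_{w ∈ L} Ψ(w)`. -/
def PsiL {α : Type} (L : Set (List α)) : Set (α × ℕ) :=
  ⋃ w ∈ L, Psi w

/-!
A critical tuple `(u₂, v₂, u, v)` yields `2 ^ m` pairwise `≈`-inequivalent words of length
`m (|u| + |v|)`: concatenations of `m` blocks, each `v u` or `u v`. At the rightmost block where
two of them differ, one word has the suffix `u₂ w` and the other `v₂ w` with `w ∈ {u, v}*`.

Conversely, let `T x` be the state transformation of `x` in the minimal automaton. Every word
factors as `Y₁ a₁ ⋯ Y_k a_k` with `T (Y_j a_j ⋯) = T (a_j ⋯)`, and `k` is bounded by the number of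
transformations, so the data `(|Y_j|, a_j)_j` take polynomially many values. Words with the same
data are `≈`-equivalent: for corresponding suffixes `s`, `s'` of `Y_j`, `Y'_j`, the absence of
critical tuples gives `w ∈ {Y_j, Y'_j}*` with `s w ~ s' w`, and inserting `w` in front of `a_j ⋯`
changes no state because `Y_j` and `Y'_j` are both absorbed there.
-/

open Function

section SuffixExpansion

variable {α : Type} {r : List α → List α → Prop}

theorem SuffixExpansion.refl (hr : ∀ x, r x x) (x : List α) : SuffixExpansion r x x :=
  ⟨rfl, fun _ _ => hr _⟩

theorem Equivalence.suffixExpansion (hr : Equivalence r) : Equivalence (SuffixExpansion r) where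
  refl := SuffixExpansion.refl hr.refl
  symm := fun ⟨hl, h⟩ => ⟨hl.symm, fun i hi => hr.symm (h i (hl ▸ hi))⟩
  trans := fun ⟨hl, h⟩ ⟨hl', h'⟩ => ⟨hl.trans hl', fun i hi => hr.trans (h i hi) (h' i (hl ▸ hi))⟩

theorem SuffixExpansion.drop {x y : List α} (h : SuffixExpansion r x y) (j : ℕ) :
    SuffixExpansion r (x.drop j) (y.drop j) := by
  obtain ⟨hl, h⟩ := h
  refine ⟨by simp [hl], fun i hi => ?_⟩
  rw [List.drop_drop, List.drop_drop]
  exact h _ (by simp at hi; omega)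

theorem SuffixExpansion.append {Y Y' z z' : List α} (hY : Y.length = Y'.length)
    (hblock : ∀ i < Y.length, r (Y.drop i ++ z) (Y'.drop i ++ z'))
    (hz : SuffixExpansion r z z') : SuffixExpansion r (Y ++ z) (Y' ++ z') := by
  obtain ⟨hl, h⟩ := hz
  refine ⟨by simp [hY, hl], fun i hi => ?_⟩
  rw [List.drop_append, List.drop_append]
  rcases lt_or_ge i Y.length with hiY | hiY
  · simpa [Nat.sub_eq_zero_of_le hiY.le, hY ▸ hiY.le] using hblock i hiY
  · simp only [List.drop_eq_nil_of_le hiY, List.drop_eq_nil_of_le (hY ▸ hiY), List.nil_append, ← hY]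
    exact h _ (by simp at hi; omega)

theorem SuffixExpansion.cons {a b : α} {x y : List α} (hab : r (a :: x) (b :: y))
    (h : SuffixExpansion r x y) : SuffixExpansion r (a :: x) (b :: y) :=
  SuffixExpansion.append (Y := [a]) (Y' := [b]) rfl
    (fun i hi => by simpa [show i = 0 by simpa using hi]) h

end SuffixExpansion

section ClassCount

variable {α : Type} {r : List α → List α → Prop} {n : ℕ}

theorem classCount_eq_ncard_image :
    classCount r n = ((fun x => {y | r x y}) '' {x | x.length ≤ n}).ncard := by
  unfold classCount
  congr 1
  ext C
  simp [eq_comm]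

theorem natCard_le_classCount [Finite α] {ι : Type*} (f : ι → List α)
    (hlen : ∀ i, (f i).length ≤ n) (hinj : Injective fun i => {y | r (f i) y}) :
    Nat.card ι ≤ classCount r n := by
  rw [classCount_eq_ncard_image, ← Set.ncard_range_of_injective hinj]
  exact Set.ncard_le_ncard (Set.range_subset_iff.2 fun i => ⟨f i, hlen i, rfl⟩)
    ((List.finite_length_le α n).image _)

theorem classCount_le_ncard (hr : Equivalence r) {δ : Type*} {D : Set δ} (hD : D.Finite)
    (R : List α → δ → Prop) (hR : ∀ x, x.length ≤ n → ∃ d ∈ D, R x d)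
    (hdet : ∀ x x' d, R x d → R x' d → r x x') : classCount r n ≤ D.ncard := by
  classical
  let rep : δ → Set (List α) := fun d => if h : ∃ x, R x d then {y | r h.choose y} else ∅
  rw [classCount_eq_ncard_image]
  refine (Set.ncard_le_ncard ?_ (hD.image rep)).trans (Set.ncard_image_le hD)
  rintro _ ⟨x, hx, rfl⟩
  obtain ⟨d, hd, hxd⟩ := hR x hx
  have h : ∃ x, R x d := ⟨x, hxd⟩
  refine ⟨d, hd, ?_⟩
  ext y
  simp only [rep, dif_pos h]
  exact ⟨hr.trans (hdet _ _ d hxd h.choose_spec), hr.trans (hdet _ _ d h.choose_spec hxd)⟩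

end ClassCount

theorem ncard_setOf_length_le_le {β : Type*} [Fintype β] (K : ℕ) :
    {l : List β | l.length ≤ K}.ncard ≤ (Fintype.card β + 1) ^ K := by
  calc {l : List β | l.length ≤ K}.ncard ≤ (Set.univ : Set (Fin K → Option β)).ncard := by
        refine Set.ncard_le_ncard_of_injOn (fun l i => l[(i : ℕ)]?) (fun _ _ => trivial) ?_
          Set.finite_univ
        intro l (hl : l.length ≤ K) l' (hl' : l'.length ≤ K) h
        refine List.ext_getElem? fun i => ?_
        by_cases hi : i < K
        · exact congrFun h ⟨i, hi⟩
        · rw [List.getElem?_eq_none (by omega), List.getElem?_eq_none (by omega)]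
    _ = (Fintype.card β + 1) ^ K := by simp [Set.ncard_univ]

theorem exists_mul_pow_lt_two_pow (C k : ℕ) : ∃ m ≥ 1, C * m ^ k < 2 ^ m := by
  have h := (tendsto_pow_const_div_const_pow_of_one_lt k one_lt_two).eventually
    (gt_mem_nhds (by positivity : (0 : ℝ) < 1 / (C + 1)))
  obtain ⟨m, hm, hm1⟩ := (h.and (Filter.eventually_ge_atTop 1)).exists
  refine ⟨m, hm1, ?_⟩
  rw [div_lt_div_iff₀ (by positivity) (by positivity)] at hm
  have : (0 : ℝ) ≤ (m : ℝ) ^ k := by positivity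
  exact_mod_cast (show (C : ℝ) * m ^ k < 2 ^ m by nlinarith)

section Fooling

variable {α : Type} {r : List α → List α → Prop} {u₂ v₂ u v : List α}

variable (u v) in
def foolingWord (bs : List Bool) : List α :=
  (bs.flatMap fun b => if b then [v, u] else [u, v]).flatten

variable (u v) in
theorem foolingWord_cons (b : Bool) (bs : List Bool) :
    foolingWord u v (b :: bs) = (if b then v ++ u else u ++ v) ++ foolingWord u v bs := by
  cases b <;> simp [foolingWord]

variable (u v) in
theorem length_foolingWord (bs : List Bool) :
    (foolingWord u v bs).length = bs.length * (u.length + v.length) := by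
  induction bs with
  | nil => simp [foolingWord]
  | cons b bs ih => cases b <;> simp [foolingWord_cons, ih] <;> ring

variable (u v) in
theorem foolingWord_mem_uvStar (bs : List Bool) : foolingWord u v bs ∈ UVStar u v :=
  ⟨_, fun p hp => by
    obtain ⟨b, -, hb⟩ := List.mem_flatMap.1 hp
    cases b <;> simp at hb <;> tauto, rfl⟩

theorem IsCriticalTuple.not_suffixExpansion (hc : IsCriticalTuple r u₂ v₂ u v) {w : List α}
    (hw : w ∈ UVStar u v) : ¬ SuffixExpansion r (v ++ u ++ w) (u ++ v ++ w) := by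
  obtain ⟨hpos, hlen, ⟨P, rfl⟩, ⟨P', rfl⟩, hcrit⟩ := hc
  rintro ⟨-, h⟩
  have hPP : (P' ++ v₂ ++ P).length = (P ++ u₂ ++ P').length := by simp [hlen]; omega
  have := h (P' ++ v₂ ++ P).length (by simp; omega)
  rw [show P' ++ v₂ ++ (P ++ u₂) ++ w = (P' ++ v₂ ++ P) ++ (u₂ ++ w) by simp,
    show P ++ u₂ ++ (P' ++ v₂) ++ w = (P ++ u₂ ++ P') ++ (v₂ ++ w) by simp,
    List.drop_left, hPP, List.drop_left] at this
  exact hcrit w hw this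

theorem IsCriticalTuple.eq_of_suffixExpansion_foolingWord (hc : IsCriticalTuple r u₂ v₂ u v)
    {bs bs' : List Bool} (hl : bs.length = bs'.length)
    (h : SuffixExpansion r (foolingWord u v bs) (foolingWord u v bs'))
    (h' : SuffixExpansion r (foolingWord u v bs') (foolingWord u v bs)) : bs = bs' := by
  induction bs generalizing bs' with
  | nil => exact (List.length_eq_zero_iff.1 hl.symm).symm
  | cons b bs ih =>
    obtain ⟨b', bs', rfl⟩ := List.exists_cons_of_length_eq_add_one hl.symm
    have hblock : ∀ c : Bool, (if c then v ++ u else u ++ v).length = u.length + v.length := by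
      intro c; cases c <;> simp [add_comm]
    have htail {c c' : Bool} {x y : List α}
        (hxy : SuffixExpansion r ((if c then v ++ u else u ++ v) ++ x)
          ((if c' then v ++ u else u ++ v) ++ y)) : SuffixExpansion r x y := by
      simpa only [List.drop_left' (hblock _)] using hxy.drop (u.length + v.length)
    rw [foolingWord_cons, foolingWord_cons] at h h'
    obtain rfl := ih (by simpa using hl) (htail h) (htail h')
    cases b <;> cases b'
    · rfl
    · exact absurd h' (hc.not_suffixExpansion (foolingWord_mem_uvStar u v bs))
    · exact absurd h (hc.not_suffixExpansion (foolingWord_mem_uvStar u v bs))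
    · rfl

theorem IsCriticalTuple.two_pow_le_classCount [Finite α] (hr : ∀ x, r x x)
    (hc : IsCriticalTuple r u₂ v₂ u v) (m : ℕ) :
    2 ^ m ≤ classCount (SuffixExpansion r) (m * (u.length + v.length)) := by
  have hinj : Injective fun bs : List.Vector Bool m =>
      {y | SuffixExpansion r (foolingWord u v bs.toList) y} := by
    intro bs bs' h
    rw [Set.ext_iff] at h
    exact List.Vector.toList_injective <| hc.eq_of_suffixExpansion_foolingWord (by simp)
      ((h _).2 (SuffixExpansion.refl hr _)) ((h _).1 (SuffixExpansion.refl hr _))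
  simpa [Nat.card_eq_fintype_card, card_vector] using
    natCard_le_classCount (fun bs : List.Vector Bool m => foolingWord u v bs.toList)
      (fun bs => by simp [length_foolingWord]) hinj

theorem IsCriticalTuple.not_growsPolynomially [Finite α] (hr : ∀ x, r x x)
    (hc : IsCriticalTuple r u₂ v₂ u v) : ¬ GrowsPolynomially (classCount (SuffixExpansion r)) := by
  rintro ⟨k, C, hC⟩
  set ℓ := u.length + v.length
  obtain ⟨m, hm1, hm⟩ := exists_mul_pow_lt_two_pow (C * (ℓ + 1) ^ k) k
  have hmℓ : m * ℓ + 1 ≤ (ℓ + 1) * m := by nlinarith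
  have := calc 2 ^ m ≤ classCount (SuffixExpansion r) (m * ℓ) := hc.two_pow_le_classCount hr m
    _ ≤ C * (m * ℓ + 1) ^ k := hC _
    _ ≤ C * ((ℓ + 1) * m) ^ k := by gcongr
    _ = C * (ℓ + 1) ^ k * m ^ k := by rw [mul_pow, mul_assoc]
  omega

end Fooling

theorem setOf_isSuffix_cons_ne_nil {α : Type*} (b : α) (w : List α) :
    {t | t <:+ b :: w ∧ t ≠ []} = insert (b :: w) {t | t <:+ w ∧ t ≠ []} := by
  ext t
  simp only [List.suffix_cons_iff, Set.mem_insert_iff]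
  constructor
  · rintro ⟨rfl | ht, hne⟩ <;> simp_all
  · rintro (rfl | ⟨ht, hne⟩) <;> simp_all

namespace DFA

variable {α : Type} {σ : Type*} (M : DFA α σ)

def transformation (w : List α) : σ → σ := fun q => M.evalFrom q w

theorem transformation_append (x y : List α) :
    M.transformation (x ++ y) = M.transformation y ∘ M.transformation x :=
  funext fun q => M.evalFrom_of_append q x y

theorem eval_append_eq_transformation (x y : List α) :
    M.eval (x ++ y) = M.transformation y (M.eval x) :=
  M.evalFrom_of_append _ x y

theorem transformation_cons_congr (a : α) {v v' : List α}
    (h : M.transformation v = M.transformation v') :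
    M.transformation (a :: v) = M.transformation (a :: v') := by
  rw [← List.singleton_append, transformation_append, h, ← transformation_append,
    List.singleton_append]

theorem transformation_append_of_mem_uvStar {Y Y' z w : List α}
    (hY : M.transformation (Y ++ z) = M.transformation z)
    (hY' : M.transformation (Y' ++ z) = M.transformation z) (hw : w ∈ UVStar Y Y') :
    M.transformation (w ++ z) = M.transformation z := by
  obtain ⟨l, hl, rfl⟩ := hw
  induction l with
  | nil => rfl
  | cons p l ih =>
    rw [List.flatten_cons, List.append_assoc, transformation_append,
      ih fun q hq => hl q (List.mem_cons_of_mem p hq), ← transformation_append]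
    rcases hl p List.mem_cons_self with rfl | rfl <;> assumption

-- `d = [(|Y₁|, a₁), …, (|Y_k|, a_k)]` encodes a factorization `w = Y₁ a₁ ⋯ Y_k a_k` in which
-- each `Y_j` is absorbed by the part `a_j ⋯` of `w` that follows it.
def IsAbsorbingDecomposition : List (ℕ × α) → List α → Prop
  | [], w => w = []
  | (k, a) :: d, w => ∃ Y v, Y.length = k ∧ w = Y ++ a :: v ∧
      M.transformation (Y ++ a :: v) = M.transformation (a :: v) ∧ IsAbsorbingDecomposition d v

variable {M} in
theorem IsAbsorbingDecomposition.fst_lt_length :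
    ∀ {d : List (ℕ × α)} {w : List α}, M.IsAbsorbingDecomposition d w → ∀ c ∈ d, c.1 < w.length
  | [], _, _, _, hc => absurd hc List.not_mem_nil
  | (k, a) :: d, _, ⟨Y, v, hY, hw, _, hv⟩, c, hc => by
    subst hw
    rcases List.mem_cons.1 hc with rfl | hc
    · simp [hY]
    · have := fst_lt_length hv c hc
      simp; omega

theorem exists_isAbsorbingDecomposition [Finite σ] (w : List α) :
    ∃ d, M.IsAbsorbingDecomposition d w ∧
      d.length ≤ (M.transformation '' {s | s <:+ w ∧ s ≠ []}).ncard := by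
  suffices ∀ s, s <:+ w → ∃ d, M.IsAbsorbingDecomposition d s ∧
      d.length ≤ (M.transformation '' {t | t <:+ s ∧ t ≠ []}).ncard from this w List.suffix_rfl
  induction w with
  | nil => exact fun s hs => ⟨[], List.suffix_nil.1 hs, Nat.zero_le _⟩
  | cons b w ih =>
    intro s hs
    rcases List.suffix_cons_iff.1 hs with rfl | hs
    swap; · exact ih s hs
    rw [setOf_isSuffix_cons_ne_nil, Set.image_insert_eq]
    -- Either a shorter suffix `s` has the transformation of `b :: w`, and then the first block
    -- of `s` extends to the left up to `b`, or `b` forms a block of its own.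
    by_cases hmem : M.transformation (b :: w) ∈ M.transformation '' {t | t <:+ w ∧ t ≠ []}
    · obtain ⟨s, ⟨hsw, hs0⟩, hTs⟩ := hmem
      obtain ⟨_ | ⟨⟨k, a⟩, d⟩, hd, hlen⟩ := ih s hsw
      · exact absurd hd hs0
      obtain ⟨Y, v, rfl, rfl, habs, hv⟩ := hd
      obtain ⟨P, hP⟩ := hsw
      refine ⟨((b :: P ++ Y).length, a) :: d, ⟨b :: P ++ Y, v, rfl, by simp [← hP], ?_, hv⟩, ?_⟩
      · rw [← habs, hTs, ← hP]
        simp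
      · refine hlen.trans (Set.ncard_le_ncard ?_ (Set.toFinite _))
        refine (Set.image_mono ?_).trans (Set.subset_insert _ _)
        exact fun t ht => ⟨ht.1.trans ⟨P, hP⟩, ht.2⟩
    · obtain ⟨d, hd, hlen⟩ := ih w List.suffix_rfl
      refine ⟨(0, b) :: d, ⟨[], w, rfl, rfl, rfl, hd⟩, ?_⟩
      rw [Set.ncard_insert_of_notMem hmem (Set.toFinite _)]
      exact Nat.succ_le_succ hlen

variable {M}

theorem eval_drop_append_eq (hnc : ¬ ∃ u₂ v₂ u v, IsCriticalTuple (InvImage Eq M.eval) u₂ v₂ u v)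
    {Y Y' v v' : List α} {a : α} (hY : Y.length = Y'.length)
    (hv : M.transformation v = M.transformation v')
    (habs : M.transformation (Y ++ a :: v) = M.transformation (a :: v))
    (habs' : M.transformation (Y' ++ a :: v') = M.transformation (a :: v'))
    {i : ℕ} (hi : i < Y.length) :
    M.eval (Y.drop i ++ a :: v) = M.eval (Y'.drop i ++ a :: v') := by
  have hav := M.transformation_cons_congr a hv
  obtain ⟨w, hw, hsw⟩ :
      ∃ w ∈ UVStar Y Y', M.eval (Y.drop i ++ w) = M.eval (Y'.drop i ++ w) := by
    by_contra! h
    exact hnc ⟨_, _, Y, Y', by simp; omega, by simp [hY], List.drop_suffix _ _,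
      List.drop_suffix _ _, h⟩
  have hYz : M.transformation (Y ++ a :: v') = M.transformation (a :: v') := by
    rw [transformation_append, ← hav, ← transformation_append, habs]
  have hwz := M.transformation_append_of_mem_uvStar hYz habs' hw
  have hskip (x : List α) : M.eval (x ++ w ++ a :: v') = M.eval (x ++ a :: v') := by
    rw [List.append_assoc, eval_append_eq_transformation, hwz, eval_append_eq_transformation]
  calc M.eval (Y.drop i ++ a :: v)
      = M.eval (Y.drop i ++ w ++ a :: v') := by
        rw [hskip, eval_append_eq_transformation, eval_append_eq_transformation, hav]
    _ = M.eval (Y'.drop i ++ w ++ a :: v') := by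
        simp only [M.eval_append_eq_transformation _ (a :: v'), hsw]
    _ = M.eval (Y'.drop i ++ a :: v') := hskip _

theorem IsAbsorbingDecomposition.transformation_eq_and_suffixExpansion
    (hnc : ¬ ∃ u₂ v₂ u v, IsCriticalTuple (InvImage Eq M.eval) u₂ v₂ u v) :
    ∀ {d : List (ℕ × α)} {w w' : List α}, M.IsAbsorbingDecomposition d w →
      M.IsAbsorbingDecomposition d w' →
        M.transformation w = M.transformation w' ∧ SuffixExpansion (InvImage Eq M.eval) w w'
  | [], _, _, rfl, rfl => ⟨rfl, SuffixExpansion.refl (r := InvImage Eq M.eval) (fun _ => rfl) []⟩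
  | (_, a) :: _, _, _, ⟨Y, v, rfl, rfl, habs, hv⟩, ⟨Y', v', hY, rfl, habs', hv'⟩ => by
    obtain ⟨hT, hSE⟩ := transformation_eq_and_suffixExpansion hnc hv hv'
    have hav := M.transformation_cons_congr a hT
    refine ⟨by rw [habs, habs', hav], SuffixExpansion.append hY.symm
      (fun i hi => eval_drop_append_eq hnc hY.symm hT habs habs' hi)
      (SuffixExpansion.cons (congrFun hav M.start) hSE)⟩

theorem growsPolynomially_classCount [Fintype α] [Finite σ]
    (hnc : ¬ ∃ u₂ v₂ u v, IsCriticalTuple (InvImage Eq M.eval) u₂ v₂ u v) :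
    GrowsPolynomially (classCount (SuffixExpansion (InvImage Eq M.eval))) := by
  set K := Nat.card (σ → σ)
  refine ⟨K, (Fintype.card α + 1) ^ K, fun n => ?_⟩
  let R : List α → List (Fin n × α) → Prop := fun w l =>
    M.IsAbsorbingDecomposition (l.map fun c => ((c.1 : ℕ), c.2)) w
  have hR : ∀ w : List α, w.length ≤ n →
      ∃ l ∈ {l : List (Fin n × α) | l.length ≤ K}, R w l := by
    intro w hw
    obtain ⟨d, hd, hlen⟩ := M.exists_isAbsorbingDecomposition w
    have hlt : ∀ c ∈ d, c.1 < n := fun c hc => (hd.fst_lt_length c hc).trans_le hw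
    refine ⟨d.pmap (fun c hc => (⟨c.1, hc⟩, c.2)) hlt, ?_, ?_⟩
    · simpa using hlen.trans (Set.ncard_le_card _)
    · simpa [R, List.map_pmap] using hd
  calc classCount (SuffixExpansion (InvImage Eq M.eval)) n
      ≤ {l : List (Fin n × α) | l.length ≤ K}.ncard :=
        classCount_le_ncard (InvImage.equivalence _ _ eq_equivalence).suffixExpansion
          (List.finite_length_le _ K) R hR
          fun w w' l hw hw' => (hw.transformation_eq_and_suffixExpansion hnc hw').2
    _ ≤ (n * Fintype.card α + 1) ^ K := by
        simpa using ncard_setOf_length_le_le (β := Fin n × α) K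
    _ ≤ ((Fintype.card α + 1) * (n + 1)) ^ K := by gcongr; nlinarith
    _ = (Fintype.card α + 1) ^ K * (n + 1) ^ K := mul_pow _ _ _

end DFA

theorem Language.toDFA_eval_coe {α : Type*} (L : Language α) (x : List α) :
    (L.toDFA.eval x : Language α) = L.leftQuotient x := by
  induction x using List.reverseRecOn with
  | nil => rfl
  | append_singleton x a ih =>
    rw [DFA.eval_append_singleton, Language.step_toDFA, ih, Language.leftQuotient_append]

theorem mnrel_eq_invImage_toDFA_eval {α : Type} (L : Language α) :
    MNrel L = InvImage Eq L.toDFA.eval := by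
  ext x y
  rw [InvImage, Subtype.ext_iff, L.toDFA_eval_coe, L.toDFA_eval_coe]
  exact Set.ext_iff.symm

/-- for a regular language `L`, the map `n ↦ |Σ^{≤n}/≈_L|` is
polynomially bounded iff the Myhill–Nerode right congruence `~_L` has no critical
tuple. -/
theorem statement6 {α : Type} [Fintype α] (L : Language α) (hreg : L.IsRegular) :
    GrowsPolynomially (classCount (SuffixExpansion (MNrel L))) ↔
      ¬ ∃ u₂ v₂ u v, IsCriticalTuple (MNrel L) u₂ v₂ u v := by
  refine ⟨fun hpoly ⟨_, _, _, _, hc⟩ => hc.not_growsPolynomially (fun _ _ => Iff.rfl) hpoly,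
    fun hnc => ?_⟩
  have := hreg.finite_range_leftQuotient.to_subtype
  rw [mnrel_eq_invImage_toDFA_eval] at hnc ⊢
  exact DFA.growsPolynomially_classCount hnc
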